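/- arXiv:2302.08194 — 3 statements merged into one kernel-verified Lean document; each statement's English description precedes it below -/
import Mathlib

section
/- The unique positive real solution τ of φ(τ) - τφ'(τ) = 0 for the linear-fractional p.g.f. is τ = (-π₀(1-π) + √(π₀(1-π₀)π(1-π)))/((1-π)(π - π₀)), provided π ≠ π₀. -/
set_option maxHeartbeats 2000000 in
/-- The unique positive solution (within the radius of convergence `1/(1-π)`)
of `φ(τ) - τφ'(τ) = 0` for the linear-fractional p.g.f.
`φ(z) = π₀ + (1-π₀)πz/(1-(1-π)z)` is
`τ = (-π₀(1-π) + √(π₀(1-π₀)π(1-π)))/((1-π)(π-π₀))`, provided `π ≠ π₀`. -/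
theorem lf_tau (π₀ π : ℝ) (hπ₀ : π₀ ∈ Set.Ioo (0:ℝ) 1) (hπ : π ∈ Set.Ioo (0:ℝ) 1)
    (hne : π ≠ π₀)
    (φ : ℝ → ℝ) (hφ : ∀ z : ℝ, φ z = π₀ + (1 - π₀) * π * z / (1 - (1 - π) * z))
    (τ : ℝ)
    (hτ : τ = (-(π₀ * (1 - π)) + Real.sqrt (π₀ * (1 - π₀) * π * (1 - π)))
        / ((1 - π) * (π - π₀))) :
    (φ τ - τ * deriv φ τ = 0 ∧ 0 < τ ∧ τ < (1 - π)⁻¹) ∧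
    (∀ t : ℝ, 0 < t → t < (1 - π)⁻¹ → φ t - t * deriv φ t = 0 → t = τ) := by
  obtain ⟨h01, h02⟩ := hπ₀
  obtain ⟨h1, h2⟩ := hπ
  have h1π : 0 < 1 - π := by linarith
  have h1π₀ : 0 < 1 - π₀ := by linarith
  set s := Real.sqrt (π₀ * (1 - π₀) * π * (1 - π)) with hs
  have hsq : s * s = π₀ * (1 - π₀) * π * (1 - π) :=
    Real.mul_self_sqrt (by positivity)
  have hspos : 0 < s := Real.sqrt_pos.mpr (by positivity)
  have hdne : (1 - π) * (π - π₀) ≠ 0 :=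
    mul_ne_zero (by linarith) (sub_ne_zero.mpr hne)
  have hτd : τ * ((1 - π) * (π - π₀)) = -(π₀ * (1 - π)) + s := by
    rw [hτ]; field_simp
  -- derivative
  have hderiv : ∀ t : ℝ, 1 - (1 - π) * t ≠ 0 →
      deriv φ t = (1 - π₀) * π / (1 - (1 - π) * t) ^ 2 := by
    intro t ht
    have hφf : φ = fun z => π₀ + (1 - π₀) * π * z / (1 - (1 - π) * z) := funext hφ
    rw [hφf]
    have hg : HasDerivAt (fun z : ℝ => 1 - (1 - π) * z) (-(1 - π)) t := by
      simpa using ((hasDerivAt_id t).const_mul (1 - π)).const_sub 1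
    have hf : HasDerivAt (fun z : ℝ => (1 - π₀) * π * z) ((1 - π₀) * π) t := by
      simpa using (hasDerivAt_id t).const_mul ((1 - π₀) * π)
    have h3 := (hf.div hg ht).const_add π₀
    rw [show deriv (fun z => π₀ + (1 - π₀) * π * z / (1 - (1 - π) * z)) t = _ from h3.deriv]
    field_simp
    ring
  -- sign comparisons
  have hs2 : (τ * ((1 - π) * (π - π₀)) + π₀ * (1 - π)) ^ 2
      = π₀ * (1 - π₀) * π * (1 - π) := by
    linear_combination (τ * ((1 - π) * (π - π₀)) + π₀ * (1 - π) + s) * hτd + hsq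
  have hQa : ((1 - π) * (π - π₀)) *
      ((1 - π) * (π₀ - π) * τ ^ 2 - 2 * π₀ * (1 - π) * τ + π₀) = 0 := by
    linear_combination -hs2
  have hQ : (1 - π) * (π₀ - π) * τ ^ 2 - 2 * π₀ * (1 - π) * τ + π₀ = 0 := by
    rcases mul_eq_zero.mp hQa with h | h
    · exact absurd h hdne
    · exact h
  -- positivity and upper bound for τ
  have hτpos : 0 < τ := by
    rcases lt_or_gt_of_ne hne with hlt | hgt
    · -- π < π₀ : s < π₀(1-π), denominator negative
      have hcmp : s < π₀ * (1 - π) := by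
        rw [hs, Real.sqrt_lt' (by positivity)]
        nlinarith [mul_pos (mul_pos h01 h1π) (show (0:ℝ) < π₀ - π by linarith)]
      nlinarith [hτd, hcmp, mul_pos h1π (show (0:ℝ) < π₀ - π by linarith)]
    · -- π > π₀ : s > π₀(1-π)
      have hcmp : π₀ * (1 - π) < s := by
        rw [hs, Real.lt_sqrt (by positivity)]
        nlinarith [mul_pos (mul_pos h01 h1π) (show (0:ℝ) < π - π₀ by linarith)]
      nlinarith [hτd, hcmp, mul_pos h1π (show (0:ℝ) < π - π₀ by linarith)]
  have hτlt' : τ * (1 - π) < 1 := by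
    rcases lt_or_gt_of_ne hne with hlt | hgt
    · have hcmp : π * (1 - π₀) < s := by
        rw [hs, Real.lt_sqrt (by positivity)]
        nlinarith [mul_pos (mul_pos h1 h1π₀) (show (0:ℝ) < π₀ - π by linarith)]
      have he : τ * (1 - π) * (π₀ - π) = π₀ * (1 - π) - s := by linear_combination -hτd
      have key : τ * (1 - π) * (π₀ - π) < 1 * (π₀ - π) := by rw [he]; nlinarith [hcmp]
      have := lt_of_mul_lt_mul_right key (show (0:ℝ) ≤ π₀ - π by linarith)
      linarith
    · have hcmp : s < π * (1 - π₀) := by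
        rw [hs, Real.sqrt_lt' (by positivity)]
        nlinarith [mul_pos (mul_pos h1 h1π₀) (show (0:ℝ) < π - π₀ by linarith)]
      have he : τ * (1 - π) * (π - π₀) = s - π₀ * (1 - π) := by linear_combination hτd
      have key : τ * (1 - π) * (π - π₀) < 1 * (π - π₀) := by rw [he]; nlinarith [hcmp]
      have := lt_of_mul_lt_mul_right key (show (0:ℝ) ≤ π - π₀ by linarith)
      linarith
  have hτlt : τ < (1 - π)⁻¹ := by
    rw [inv_eq_one_div, lt_div_iff₀ h1π]; exact hτlt'
  have hdenτ : 1 - (1 - π) * τ ≠ 0 := ne_of_gt (by nlinarith [hτlt'])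
  constructor
  · refine ⟨?_, hτpos, hτlt⟩
    rw [hφ τ, hderiv τ hdenτ]
    field_simp [show 1 - τ * (1 - π) ≠ 0 by rwa [mul_comm] at hdenτ]
    linear_combination hQ
  · intro t ht1 ht2 heq
    have ht2' : t * (1 - π) < 1 := by
      have := mul_lt_mul_of_pos_right ht2 h1π
      rwa [inv_mul_cancel₀ (ne_of_gt h1π)] at this
    have hdent : 1 - (1 - π) * t ≠ 0 := ne_of_gt (by nlinarith [ht2'])
    rw [hφ t, hderiv t hdent] at heq
    have hQt : (1 - π) * (π₀ - π) * t ^ 2 - 2 * π₀ * (1 - π) * t + π₀ = 0 := by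
      field_simp [show 1 - t * (1 - π) ≠ 0 by rwa [mul_comm] at hdent] at heq
      have h' : (1 - (1 - π) * t) *
          ((1 - π) * (π₀ - π) * t ^ 2 - 2 * π₀ * (1 - π) * t + π₀) = 0 := by
        linear_combination (1 - (1 - π) * t) * heq
      rcases mul_eq_zero.mp h' with h | h
      · exact absurd h hdent
      · exact h
    by_contra htne
    have hfac : (t - τ) * ((1 - π) * ((π₀ - π) * (t + τ) - 2 * π₀)) = 0 := by
      linear_combination hQt - hQ
    have hE : (π₀ - π) * (t + τ) = 2 * π₀ := by
      rcases mul_eq_zero.mp hfac with h | h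
      · exact absurd (by linarith [sub_eq_zero.mp h]) htne
      · rcases mul_eq_zero.mp h with h' | h'
        · linarith
        · linarith
    rcases lt_or_gt_of_ne hne with hlt | hgt
    · -- π < π₀ : t = other root ≥ 1/(1-π), contradiction
      nlinarith [hτd, hspos, ht2', hτlt', hE]
    · -- π > π₀ : LHS negative
      nlinarith [hE, hτpos, ht1]
end

section
/- The total progeny of a BGW tree with i ≥ 1 independent founders satisfies Lagrange's inversion identity: the coefficient of z^n in Φ(z)^i equals (i/n)·[z^{n-i}]φ(z)^n, i.e., P(θ_{i,0} = n) = (i/n)P(S_n(i) = 0) for n ≥ i (the Dwass–Kemperman formula). -/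
/-- `convPow p n j` is the coefficient of `z^j` in `φ(z)^n`, where
`φ(z) = Σ_m p m z^m`; i.e. the `n`-fold convolution power of the sequence `p`. -/
def convPow (p : ℕ → ℝ) : ℕ → ℕ → ℝ
  | 0, j => if j = 0 then 1 else 0
  | n + 1, j => ∑ k ∈ Finset.range (j + 1), convPow p n k * p (j - k)

private lemma convPow_coeff (q : ℕ → ℝ) (n j : ℕ) :
    convPow q n j = PowerSeries.coeff j ((PowerSeries.mk q) ^ n) := by
  induction n generalizing j with
  | zero => simp [convPow, PowerSeries.coeff_one]
  | succ n ih =>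
    rw [convPow, pow_succ, PowerSeries.coeff_mul,
      Finset.Nat.sum_antidiagonal_eq_sum_range_succ_mk]
    simp [ih, PowerSeries.coeff_mk]

private lemma coeff_pow_eq_zero (q : ℕ → ℝ) (hq : q 0 = 0) :
    ∀ a j : ℕ, j < a → PowerSeries.coeff j ((PowerSeries.mk q) ^ a) = 0 := by
  intro a
  induction a with
  | zero => intro j h; omega
  | succ a ih =>
    intro j h
    rw [pow_succ, PowerSeries.coeff_mul]
    apply Finset.sum_eq_zero
    intro x hx
    rw [Finset.HasAntidiagonal.mem_antidiagonal] at hx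
    rcases lt_or_ge x.1 a with h1 | h1
    · rw [ih x.1 h1, zero_mul]
    · have hx2 : x.2 = 0 := by omega
      rw [hx2, PowerSeries.coeff_mk, hq, mul_zero]

private noncomputable def dz (f : PowerSeries ℝ) : PowerSeries ℝ :=
  PowerSeries.mk fun k => (k : ℝ) * PowerSeries.coeff k f

private lemma coeff_dz (f : PowerSeries ℝ) (j : ℕ) :
    PowerSeries.coeff j (dz f) = (j : ℝ) * PowerSeries.coeff j f := by
  simp [dz]

private lemma dz_mul (f g : PowerSeries ℝ) : dz (f * g) = dz f * g + f * dz g := by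
  ext j
  rw [map_add, PowerSeries.coeff_mul, PowerSeries.coeff_mul, coeff_dz, PowerSeries.coeff_mul,
    Finset.mul_sum, ← Finset.sum_add_distrib]
  refine Finset.sum_congr rfl fun x hx => ?_
  rw [Finset.HasAntidiagonal.mem_antidiagonal] at hx
  rw [coeff_dz, coeff_dz]
  have hj : (j : ℝ) = (x.1 : ℝ) + (x.2 : ℝ) := by rw [← hx]; push_cast; ring
  rw [hj]; ring

private lemma dz_pow (Q : PowerSeries ℝ) (n : ℕ) :
    dz (Q ^ (n + 1)) = PowerSeries.C ((n : ℝ) + 1) * (dz Q * Q ^ n) := by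
  induction n with
  | zero => simp
  | succ n ih =>
    have h2 : PowerSeries.C (((n + 1 : ℕ) : ℝ) + 1)
        = PowerSeries.C ((n : ℝ) + 1) + 1 := by
      push_cast
      rw [map_add, map_one]
    rw [pow_succ, dz_mul, ih, h2]
    ring

private lemma coeff_succ (p c : ℕ → ℝ) (hc0 : c 0 = 0)
    (hrec : ∀ n : ℕ, c (n + 1) = ∑ m ∈ Finset.range (n + 1), p m * convPow c m n)
    (i n : ℕ) :
    PowerSeries.coeff (n + 1) ((PowerSeries.mk c) ^ (i + 1)) =
      ∑ m ∈ Finset.range (n + 2),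
        p m * PowerSeries.coeff n ((PowerSeries.mk c) ^ (m + i)) := by
  set C := PowerSeries.mk c with hC
  rw [pow_succ, PowerSeries.coeff_mul, Finset.Nat.sum_antidiagonal_eq_sum_range_succ_mk,
    Finset.sum_range_succ]
  have hlast : PowerSeries.coeff (n + 1) (C ^ i) * PowerSeries.coeff (n + 1 - (n + 1)) C
      = 0 := by
    simp [hC, PowerSeries.coeff_mk, hc0]
  rw [hlast, add_zero]
  have hterm : ∀ a ∈ Finset.range (n + 1),
      PowerSeries.coeff a (C ^ i) * PowerSeries.coeff (n + 1 - a) C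
        = ∑ m ∈ Finset.range (n + 2),
            p m * (PowerSeries.coeff a (C ^ i) * PowerSeries.coeff (n - a) (C ^ m)) := by
    intro a ha
    rw [Finset.mem_range] at ha
    have h1 : n + 1 - a = (n - a) + 1 := by omega
    rw [hC, PowerSeries.coeff_mk, h1, hrec (n - a)]
    have h2 : ∑ m ∈ Finset.range (n - a + 1), p m * convPow c m (n - a)
        = ∑ m ∈ Finset.range (n + 2), p m * convPow c m (n - a) := by
      apply Finset.sum_subset
      · apply Finset.range_subset_range.mpr; omega
      · intro m hm hm'
        rw [Finset.mem_range] at hm hm'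
        rw [convPow_coeff, coeff_pow_eq_zero c hc0 m (n - a) (by omega), mul_zero]
    rw [h2, Finset.mul_sum]
    refine Finset.sum_congr rfl fun m _ => ?_
    rw [convPow_coeff]; ring
  rw [Finset.sum_congr rfl hterm, Finset.sum_comm]
  refine Finset.sum_congr rfl fun m _ => ?_
  rw [← Finset.mul_sum]
  congr 1
  rw [show m + i = i + m by ring, pow_add, PowerSeries.coeff_mul,
    Finset.Nat.sum_antidiagonal_eq_sum_range_succ_mk]

private lemma main_lemma (p c : ℕ → ℝ) (hc0 : c 0 = 0)
    (hrec : ∀ n : ℕ, c (n + 1) = ∑ m ∈ Finset.range (n + 1), p m * convPow c m n) :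
    ∀ n : ℕ, 1 ≤ n → ∀ a : ℕ, a ≤ n →
      (n : ℝ) * PowerSeries.coeff n ((PowerSeries.mk c) ^ a)
        = (a : ℝ) * PowerSeries.coeff (n - a) ((PowerSeries.mk p) ^ n) := by
  intro n hn
  induction n, hn using Nat.le_induction with
  | base =>
    intro a ha
    interval_cases a
    · simp [PowerSeries.coeff_one]
    · have h1 : c 1 = p 0 := by
        have := hrec 0
        simpa [convPow] using this
      simp [pow_one, PowerSeries.coeff_mk, h1]
  | succ n hn ih =>
    intro a ha
    match a with
    | 0 => simp [PowerSeries.coeff_one]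
    | i + 1 =>
      have hin : i ≤ n := by omega
      set j := n - i with hjdef
      have hn0 : (n : ℝ) ≠ 0 := Nat.cast_ne_zero.mpr (by omega)
      apply mul_left_cancel₀ hn0
      rw [coeff_succ p c hc0 hrec i n]
      -- restrict the sum to range (j+1)
      have hsum : ∑ m ∈ Finset.range (n + 2),
          p m * PowerSeries.coeff n ((PowerSeries.mk c) ^ (m + i))
          = ∑ m ∈ Finset.range (j + 1),
            p m * PowerSeries.coeff n ((PowerSeries.mk c) ^ (m + i)) := by
        symm
        apply Finset.sum_subset
        · apply Finset.range_subset_range.mpr; omega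
        · intro m hm hm'
          rw [Finset.mem_range] at hm hm'
          rw [coeff_pow_eq_zero c hc0 (m + i) n (by omega), mul_zero]
      rw [hsum]
      set S1 := ∑ m ∈ Finset.range (j + 1),
        p m * PowerSeries.coeff (j - m) ((PowerSeries.mk p) ^ n) with hS1
      set S2 := ∑ m ∈ Finset.range (j + 1),
        (m : ℝ) * p m * PowerSeries.coeff (j - m) ((PowerSeries.mk p) ^ n) with hS2
      have fact1 : PowerSeries.coeff j ((PowerSeries.mk p) ^ (n + 1)) = S1 := by
        rw [pow_succ', PowerSeries.coeff_mul,
          Finset.Nat.sum_antidiagonal_eq_sum_range_succ_mk, hS1]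
        refine Finset.sum_congr rfl fun m _ => ?_
        rw [PowerSeries.coeff_mk]
      have fact2 : (j : ℝ) * PowerSeries.coeff j ((PowerSeries.mk p) ^ (n + 1))
          = ((n : ℝ) + 1) * S2 := by
        have h3 := congrArg (PowerSeries.coeff j) (dz_pow (PowerSeries.mk p) n)
        rw [coeff_dz, PowerSeries.coeff_C_mul, PowerSeries.coeff_mul,
          Finset.Nat.sum_antidiagonal_eq_sum_range_succ_mk] at h3
        rw [h3, hS2]
        congr 1
        refine Finset.sum_congr rfl fun m _ => ?_
        simp [dz, PowerSeries.coeff_mk]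
      -- per-term induction hypothesis
      have hterm : ∀ m ∈ Finset.range (j + 1),
          (n : ℝ) * (p m * PowerSeries.coeff n ((PowerSeries.mk c) ^ (m + i)))
            = ((m : ℝ) + (i : ℝ)) * (p m * PowerSeries.coeff (j - m)
                ((PowerSeries.mk p) ^ n)) := by
        intro m hm
        rw [Finset.mem_range] at hm
        have h4 := ih (m + i) (by omega)
        have h5 : n - (m + i) = j - m := by omega
        rw [h5] at h4
        have h6 : ((m + i : ℕ) : ℝ) = (m : ℝ) + (i : ℝ) := by push_cast; ring
        rw [h6] at h4
        calc (n : ℝ) * (p m * PowerSeries.coeff n ((PowerSeries.mk c) ^ (m + i)))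
            = p m * ((n : ℝ) * PowerSeries.coeff n ((PowerSeries.mk c) ^ (m + i))) := by ring
          _ = p m * (((m : ℝ) + (i : ℝ)) * PowerSeries.coeff (j - m)
                ((PowerSeries.mk p) ^ n)) := by rw [h4]
          _ = _ := by ring
      have hLHS : (n : ℝ) * (((n + 1 : ℕ) : ℝ) * ∑ m ∈ Finset.range (j + 1),
          p m * PowerSeries.coeff n ((PowerSeries.mk c) ^ (m + i)))
          = ((n : ℝ) + 1) * (S2 + (i : ℝ) * S1) := by
        have e1 : ∑ m ∈ Finset.range (j + 1),
            (n : ℝ) * (p m * PowerSeries.coeff n ((PowerSeries.mk c) ^ (m + i)))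
            = S2 + (i : ℝ) * S1 := by
          rw [Finset.sum_congr rfl hterm, hS1, hS2, Finset.mul_sum,
            ← Finset.sum_add_distrib]
          exact Finset.sum_congr rfl fun m _ => by ring
        rw [← e1, ← Finset.mul_sum]
        push_cast
        ring
      rw [hLHS]
      have hja : n + 1 - (i + 1) = j := by omega
      rw [hja]
      have hjr : (j : ℝ) = (n : ℝ) - (i : ℝ) := by
        rw [hjdef]; push_cast [Nat.cast_sub hin]; ring
      rw [fact1, hjr] at fact2
      rw [fact1]
      push_cast
      linear_combination -fact2

/-- Lagrange inversion / Dwass–Kemperman formula: if `Φ(z) = zφ(Φ(z))`, `Φ(0)=0`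
(expressed coefficientwise: `c` is the coefficient sequence of `Φ`, `p` that of `φ`),
then `[z^n] Φ(z)^i = (i/n) [z^{n-i}] φ(z)^n` for `1 ≤ i ≤ n`; probabilistically,
`P(θ_{i,0} = n) = (i/n) P(S_n(i) = 0)`. -/
theorem dwass_kemperman (p c : ℕ → ℝ) (hp0 : 0 < p 0) (hc0 : c 0 = 0)
    (hrec : ∀ n : ℕ, c (n + 1) = ∑ m ∈ Finset.range (n + 1), p m * convPow c m n) :
    ∀ i n : ℕ, 1 ≤ i → i ≤ n →
      convPow c i n = ((i : ℝ) / (n : ℝ)) * convPow p n (n - i) := by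
  intro i n hi hn
  have hn1 : 1 ≤ n := le_trans hi hn
  have h := main_lemma p c hc0 hrec n hn1 i hn
  have hn0 : (n : ℝ) ≠ 0 := Nat.cast_ne_zero.mpr (by omega)
  rw [convPow_coeff, convPow_coeff, div_mul_eq_mul_div, eq_div_iff hn0]
  linarith [h]
end

section
/- For the linear-fractional branching mechanism with μ ≠ 1, the scale function satisfies w(0) = 1/π₀ and, for j ≥ 1, w(j) = (π/(π₀-(1-π)))·[1 - ((1-π₀)/π)(π₀/(1-π))^{-(j+1)}] if μ < 1, while for μ = 1 (π₀ = 1-π), w(j) = (1 + πj)/(1-π). -/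
set_option maxHeartbeats 1000000

open FormalMultilinearSeries Filter
open scoped NNReal

private lemma coeff_unique_lf (a b : ℕ → ℝ)
    (ha : Summable fun j : ℕ => a j * (1/2 : ℝ) ^ j)
    (hb : Summable fun j : ℕ => b j * (1/2 : ℝ) ^ j)
    (hab : ∀ z : ℝ, 0 < z → z < 1/2 → ∑' j : ℕ, a j * z ^ j = ∑' j : ℕ, b j * z ^ j) :
    a = b := by
  have hrad : ∀ c : ℕ → ℝ, (Summable fun j : ℕ => c j * (1/2 : ℝ) ^ j) →
      (1/2 : ℝ≥0) ≤ (ofScalars ℝ c).radius := by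
    intro c hc
    apply FormalMultilinearSeries.le_radius_of_tendsto (l := 0)
    have := hc.tendsto_atTop_zero
    have h2 := this.norm
    simp only [norm_zero] at h2
    convert h2 using 2 with n
    rw [ofScalars_norm, norm_mul, norm_pow]
    norm_num
  have hpos : ∀ c : ℕ → ℝ, (Summable fun j : ℕ => c j * (1/2 : ℝ) ^ j) →
      0 < (ofScalars ℝ c).radius := by
    intro c hc
    refine lt_of_lt_of_le ?_ (hrad c hc)
    norm_num
  have hpa := (ofScalars ℝ a).hasFPowerSeriesOnBall (hpos a ha)
  have hpb := (ofScalars ℝ b).hasFPowerSeriesOnBall (hpos b hb)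
  have hsum : ∀ c : ℕ → ℝ, ∀ z : ℝ, (ofScalars ℝ c).sum z = ∑' j : ℕ, c j * z ^ j := by
    intro c z
    refine tsum_congr fun n => ?_
    rw [ofScalars_apply_eq, smul_eq_mul]
  have hfreq : ∃ᶠ z in nhdsWithin (0:ℝ) {(0:ℝ)}ᶜ,
      (ofScalars ℝ a).sum z = (ofScalars ℝ b).sum z := by
    have hev : ∀ᶠ z in nhdsWithin (0:ℝ) (Set.Ioi 0),
        (ofScalars ℝ a).sum z = (ofScalars ℝ b).sum z := by
      filter_upwards [Ioo_mem_nhdsGT_of_mem (by norm_num : (0:ℝ) ∈ Set.Ico (0:ℝ) (1/2))]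
        with z hz
      rw [hsum, hsum]
      exact hab z hz.1 hz.2
    exact (hev.frequently).filter_mono (nhdsWithin_mono 0 (fun z hz => ne_of_gt hz))
  have heq : (ofScalars ℝ a).sum =ᶠ[nhds (0:ℝ)] (ofScalars ℝ b).sum :=
    (AnalyticAt.frequently_eq_iff_eventually_eq
      hpa.analyticAt hpb.analyticAt).mp hfreq
  have := (hpa.hasFPowerSeriesAt.congr heq).eq_formalMultilinearSeries hpb.hasFPowerSeriesAt
  exact (ofScalars_series_eq_iff ℝ a b).mp this

/-- Explicit scale function of the linear-fractional branching mechanism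
`φ(z) = π₀ + (1-π₀)πz/(1-(1-π)z)`, `μ = (1-π₀)/π`: if `Σ w(j)z^j = 1/(φ(z)-z)`
then `w(0) = 1/π₀`; if `μ < 1`, `w(j) = (π/(π₀-(1-π)))[1-((1-π₀)/π)(π₀/(1-π))^{-(j+1)}]`
for `j ≥ 1`; if `μ = 1` (i.e. `π₀ = 1-π`), `w(j) = (1+πj)/(1-π)`. -/
theorem lf_scale_function (π₀ π : ℝ) (hπ₀ : π₀ ∈ Set.Ioo (0:ℝ) 1) (hπ : π ∈ Set.Ioo (0:ℝ) 1)
    (φ : ℝ → ℝ) (hφ : ∀ z : ℝ, φ z = π₀ + (1 - π₀) * π * z / (1 - (1 - π) * z))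
    (w : ℕ → ℝ)
    (hw : ∀ z : ℝ, 0 ≤ z → z < 1 →
      (Summable fun j : ℕ => w j * z ^ j) ∧ ∑' j : ℕ, w j * z ^ j = 1 / (φ z - z)) :
    w 0 = 1 / π₀ ∧
    ((1 - π₀) / π < 1 → ∀ j : ℕ, 1 ≤ j →
      w j = (π / (π₀ - (1 - π)))
        * (1 - ((1 - π₀) / π) * (π₀ / (1 - π)) ^ (-(j + 1 : ℤ)))) ∧
    (π₀ = 1 - π → ∀ j : ℕ, 1 ≤ j → w j = (1 + π * j) / (1 - π)) := by
  obtain ⟨hπ₀0, hπ₀1⟩ := hπ₀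
  obtain ⟨hπ0, hπ1⟩ := hπ
  -- the factorization of φ z - z
  have hkey : ∀ z : ℝ, 0 ≤ z → z < 1 →
      φ z - z = (1 - z) * (π₀ - (1 - π) * z) / (1 - (1 - π) * z) := by
    intro z hz0 hz1
    have h1 : 1 - (1 - π) * z ≠ 0 := by nlinarith
    rw [hφ]
    rw [eq_div_iff h1, sub_mul, add_mul, div_mul_cancel₀ _ h1]
    ring
  -- w 0
  have hw0 : w 0 = 1 / π₀ := by
    have h := (hw 0 le_rfl one_pos).2
    rw [tsum_eq_single 0 (by intro j hj; simp [zero_pow hj])] at h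
    simpa [hφ] using h
  refine ⟨hw0, ?_, ?_⟩
  · -- subcritical case μ < 1
    intro hμ j hj
    have hsub : 1 - π < π₀ := by
      rw [div_lt_one hπ0] at hμ; linarith
    set q : ℝ := (1 - π) / π₀ with hqdef
    have hq0 : 0 < q := div_pos (by linarith) hπ₀0
    have hq1 : q < 1 := (div_lt_one hπ₀0).mpr hsub
    set b : ℕ → ℝ := fun j =>
      (π / (π₀ - (1 - π))) * (1 - ((1 - π₀) / π) * q ^ (j + 1)) with hbdef
    have hterm : ∀ z : ℝ, ∀ j : ℕ, b j * z ^ j =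
        (π / (π₀ - (1 - π))) * z ^ j
          - (π / (π₀ - (1 - π))) * ((1 - π₀) / π) * q * (q * z) ^ j := by
      intro z j
      rw [hbdef]
      simp only [mul_pow, pow_succ]
      ring
    have hbs : ∀ z : ℝ, 0 ≤ z → z < 1 → Summable fun j : ℕ => b j * z ^ j := by
      intro z hz0 hz1
      have habs : |z| < 1 := by rw [abs_of_nonneg hz0]; exact hz1
      have habs2 : |q * z| < 1 := by
        rw [abs_of_nonneg (by positivity)]
        nlinarith
      have s1 := (summable_geometric_of_abs_lt_one habs).mul_left (π / (π₀ - (1 - π)))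
      have s2 := (summable_geometric_of_abs_lt_one habs2).mul_left
        ((π / (π₀ - (1 - π))) * ((1 - π₀) / π) * q)
      exact (s1.sub s2).congr (fun j => (hterm z j).symm)
    have hbt : ∀ z : ℝ, 0 < z → z < 1/2 → ∑' j : ℕ, w j * z ^ j = ∑' j : ℕ, b j * z ^ j := by
      intro z hz0 hz2
      have hz1 : z < 1 := by linarith
      have habs : |z| < 1 := by rw [abs_of_nonneg hz0.le]; exact hz1
      have habs2 : |q * z| < 1 := by
        rw [abs_of_nonneg (by positivity)]
        nlinarith
      have s1 := (summable_geometric_of_abs_lt_one habs).mul_left (π / (π₀ - (1 - π)))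
      have s2 := (summable_geometric_of_abs_lt_one habs2).mul_left
        ((π / (π₀ - (1 - π))) * ((1 - π₀) / π) * q)
      have hbt2 : ∑' j : ℕ, b j * z ^ j =
          (π / (π₀ - (1 - π))) * (1 - z)⁻¹
            - (π / (π₀ - (1 - π))) * ((1 - π₀) / π) * q * (1 - q * z)⁻¹ := by
        rw [tsum_congr (hterm z), Summable.tsum_sub s1 s2, tsum_mul_left, tsum_mul_left,
          tsum_geometric_of_abs_lt_one habs, tsum_geometric_of_abs_lt_one habs2]
      rw [(hw z hz0.le hz1).2, hbt2, hkey z hz0.le hz1, hqdef]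
      have h1 : 1 - (1 - π) * z ≠ 0 := by nlinarith
      have h2 : (1 : ℝ) - z ≠ 0 := by nlinarith
      have h3 : π₀ - (1 - π) * z ≠ 0 := by nlinarith
      have h4 : π₀ - (1 - π) ≠ 0 := by nlinarith
      have h5 : (1 : ℝ) - (1 - π) / π₀ * z ≠ 0 := by
        have : (1 : ℝ) - (1 - π) / π₀ * z = (π₀ - (1 - π) * z) / π₀ := by
          field_simp
        rw [this]
        exact div_ne_zero h3 (ne_of_gt hπ₀0)
      have e : (1 : ℝ) - (1 - π) / π₀ * z = (π₀ - (1 - π) * z) / π₀ := by field_simp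
      rw [e, one_div_div, inv_div]
      rw [div_eq_iff (mul_ne_zero h2 h3)]
      field_simp
      ring
    have hwb : w = b :=
      coeff_unique_lf w b (hw (1/2) (by norm_num) (by norm_num)).1
        (hbs (1/2) (by norm_num) (by norm_num)) hbt
    rw [hwb, hbdef]
    have hzp : (π₀ / (1 - π) : ℝ) ^ (-(j + 1 : ℤ)) = q ^ (j + 1) := by
      rw [zpow_neg, ← inv_zpow, inv_div, ← hqdef]
      have : ((j : ℤ) + 1) = ((j + 1 : ℕ) : ℤ) := by push_cast; ring
      rw [this, zpow_natCast]
    rw [hzp]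
  · -- critical case μ = 1
    intro hμ j hj
    set b : ℕ → ℝ := fun j => (1 + π * j) / (1 - π) with hbdef
    have hterm : ∀ z : ℝ, ∀ j : ℕ, b j * z ^ j =
        (1 / (1 - π)) * z ^ j + (π / (1 - π)) * ((j : ℝ) * z ^ j) := by
      intro z j
      rw [hbdef]
      have : (1 - π : ℝ) ≠ 0 := by linarith
      field_simp
    have hbs : ∀ z : ℝ, 0 ≤ z → z < 1 → Summable fun j : ℕ => b j * z ^ j := by
      intro z hz0 hz1
      have habs : ‖z‖ < 1 := by rw [Real.norm_eq_abs, abs_of_nonneg hz0]; exact hz1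
      have s1 := (summable_geometric_of_norm_lt_one habs).mul_left (1 / (1 - π))
      have s2 := (hasSum_coe_mul_geometric_of_norm_lt_one habs).summable.mul_left (π / (1 - π))
      exact (s1.add s2).congr (fun j => (hterm z j).symm)
    have hbt : ∀ z : ℝ, 0 < z → z < 1/2 → ∑' j : ℕ, w j * z ^ j = ∑' j : ℕ, b j * z ^ j := by
      intro z hz0 hz2
      have hz1 : z < 1 := by linarith
      have habs : ‖z‖ < 1 := by rw [Real.norm_eq_abs, abs_of_nonneg hz0.le]; exact hz1
      have s1 := (summable_geometric_of_norm_lt_one habs).mul_left (1 / (1 - π))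
      have s2 := (hasSum_coe_mul_geometric_of_norm_lt_one habs).summable.mul_left (π / (1 - π))
      have hbt2 : ∑' j : ℕ, b j * z ^ j =
          (1 / (1 - π)) * (1 - z)⁻¹ + (π / (1 - π)) * (z / (1 - z) ^ 2) := by
        rw [tsum_congr (hterm z), Summable.tsum_add s1 s2, tsum_mul_left, tsum_mul_left,
          tsum_geometric_of_norm_lt_one habs, tsum_coe_mul_geometric_of_norm_lt_one habs]
      rw [(hw z hz0.le hz1).2, hbt2, hkey z hz0.le hz1, hμ, one_div_div]
      have h1 : 1 - (1 - π) * z ≠ 0 := by nlinarith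
      have h2 : (1 : ℝ) - z ≠ 0 := by nlinarith
      have h3 : (1 - π : ℝ) ≠ 0 := by linarith
      have h4 : (1 - π : ℝ) - (1 - π) * z ≠ 0 := by nlinarith
      field_simp
      ring
    have hwb : w = b :=
      coeff_unique_lf w b (hw (1/2) (by norm_num) (by norm_num)).1
        (hbs (1/2) (by norm_num) (by norm_num)) hbt
    rw [hwb, hbdef]
end
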